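/- arXiv:math/0112315 — 3 statements merged into one kernel-verified Lean document; each statement's English description precedes it below -/
import Mathlib

section
/- Let (Ω, F, P) be a probability space and let A_1, …, A_n be events with union A = ⋃_{i=1}^n A_i. If Σ_{i=1}^n P(A_i) > 0, then P(A) ≥ (Σ_{i=1}^n P(A_i))² / (Σ_{i=1}^n P(A_i) + 2 Σ_{1 ≤ i < j ≤ n} P(A_i ∩ A_j)). -/
/-!
Let `N = ∑ i, 𝟙_{A i}` count the events that occur. Then `E[N] = ∑ P(A i)` and
`E[N²] = ∑_{i,j} P(A i ∩ A j) = ∑ P(A i) + 2 ∑_{i<j} P(A i ∩ A j)`, and since `N` vanishes off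
`A = ⋃ A i`, Cauchy–Schwarz against `𝟙_A` gives `E[N]² ≤ P(A) E[N²]`.
-/

open MeasureTheory Finset

theorem Finset.sum_sum_eq_sum_add_two_mul_sum_sum_ite_lt {ι R : Type*} [Fintype ι] [LinearOrder ι]
    [CommSemiring R] (f : ι → ι → R) (hf : ∀ i j, f i j = f j i) :
    ∑ i, ∑ j, f i j = ∑ i, f i i + 2 * ∑ i, ∑ j, if i < j then f i j else 0 := by
  have hsplit : ∀ i j, f i j =
      (if i = j then f i j else 0) + (if i < j then f i j else 0) + (if j < i then f i j else 0) := by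
    intro i j
    rcases lt_trichotomy i j with h | rfl | h
    · simp [h, h.ne, h.not_gt]
    · simp
    · simp [h, h.ne', h.not_gt]
  have hlower : ∑ i, ∑ j, (if j < i then f i j else 0) = ∑ i, ∑ j, if i < j then f i j else 0 := by
    rw [sum_comm]
    simp_rw [hf]
  calc ∑ i, ∑ j, f i j
      = ∑ i, ∑ j, ((if i = j then f i j else 0) + (if i < j then f i j else 0)
          + (if j < i then f i j else 0)) := by simp_rw [← hsplit]
    _ = ∑ i, f i i + 2 * ∑ i, ∑ j, if i < j then f i j else 0 := by
      simp only [sum_add_distrib, sum_ite_eq, mem_univ, if_true, hlower]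
      ring

section CauchySchwarz

variable {α : Type*} [MeasurableSpace α] {μ : Measure α} [IsFiniteMeasure μ]

theorem sq_integral_le_measureReal_univ_mul_integral_sq {f : α → ℝ} (hf : MemLp f 2 μ) :
    (∫ x, f x ∂μ) ^ 2 ≤ μ.real Set.univ * ∫ x, f x ^ 2 ∂μ := by
  have hf1 : Integrable f μ := hf.integrable one_le_two
  -- `t ↦ ∫ (f - t)²` is a nonnegative quadratic polynomial, so its discriminant is nonpositive.
  have hquad : ∀ t : ℝ,
      0 ≤ μ.real Set.univ * (t * t) + (-2 * ∫ x, f x ∂μ) * t + ∫ x, f x ^ 2 ∂μ := by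
    intro t
    have hexpand : ∫ x, (f x - t) ^ 2 ∂μ
        = μ.real Set.univ * (t * t) + (-2 * ∫ x, f x ∂μ) * t + ∫ x, f x ^ 2 ∂μ := by
      have hlin : Integrable (fun x => 2 * f x * t) μ := (hf1.const_mul 2).mul_const t
      have hdiff : Integrable (fun x => f x ^ 2 - 2 * f x * t) μ := hf.integrable_sq.sub hlin
      simp_rw [sub_sq]
      rw [integral_add hdiff (integrable_const _),
        integral_sub hf.integrable_sq hlin, integral_mul_const,
        integral_const_mul, integral_const, smul_eq_mul]
      ring
    exact hexpand ▸ integral_nonneg fun x => sq_nonneg _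
  have := discrim_le_zero hquad
  rw [discrim] at this
  linarith

theorem sq_integral_le_measureReal_mul_integral_sq {f : α → ℝ} {s : Set α} (hf : MemLp f 2 μ)
    (hfs : ∀ x ∉ s, f x = 0) :
    (∫ x, f x ∂μ) ^ 2 ≤ μ.real s * ∫ x, f x ^ 2 ∂μ := by
  have hfs2 : ∀ x ∉ s, f x ^ 2 = 0 := fun x hx => by simp [hfs x hx]
  rw [← setIntegral_eq_integral_of_forall_compl_eq_zero hfs,
    ← setIntegral_eq_integral_of_forall_compl_eq_zero hfs2, ← measureReal_restrict_apply_univ]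
  exact sq_integral_le_measureReal_univ_mul_integral_sq (hf.restrict s)

end CauchySchwarz

section OccurrenceCount

variable {Ω ι : Type*} [Fintype ι]

noncomputable def occurrenceCount (A : ι → Set Ω) (x : Ω) : ℝ :=
  ∑ i, (A i).indicator 1 x

theorem occurrenceCount_eq_zero_of_notMem_iUnion (A : ι → Set Ω) {x : Ω} (hx : x ∉ ⋃ i, A i) :
    occurrenceCount A x = 0 :=
  sum_eq_zero fun i _ => Set.indicator_of_notMem (fun hi => hx (Set.mem_iUnion_of_mem i hi)) _

theorem occurrenceCount_sq (A : ι → Set Ω) (x : Ω) :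
    occurrenceCount A x ^ 2 = ∑ i, ∑ j, (A i ∩ A j).indicator 1 x := by
  simp only [occurrenceCount, sq, sum_mul_sum, Set.inter_indicator_one, Pi.mul_apply]

variable [MeasurableSpace Ω] {μ : Measure Ω} [IsFiniteMeasure μ] {A : ι → Set Ω}

theorem memLp_occurrenceCount (hA : ∀ i, MeasurableSet (A i)) (p : ENNReal) :
    MemLp (occurrenceCount A) p μ := by
  have : occurrenceCount A = ∑ i, (A i).indicator 1 := by
    ext x
    simp [occurrenceCount]
  rw [this]
  exact memLp_finsetSum' _ fun i _ => memLp_indicator_const p (hA i) 1 (Or.inr (measure_ne_top _ _))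

theorem integral_occurrenceCount (hA : ∀ i, MeasurableSet (A i)) :
    ∫ x, occurrenceCount A x ∂μ = ∑ i, μ.real (A i) := by
  simp only [occurrenceCount]
  rw [integral_finsetSum _ fun i _ => (integrable_const 1).indicator (hA i)]
  exact sum_congr rfl fun i _ => integral_indicator_one (hA i)

theorem integral_occurrenceCount_sq (hA : ∀ i, MeasurableSet (A i)) :
    ∫ x, occurrenceCount A x ^ 2 ∂μ = ∑ i, ∑ j, μ.real (A i ∩ A j) := by
  simp only [occurrenceCount_sq]
  rw [integral_finsetSum _ fun i _ => integrable_finsetSum _ fun j _ =>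
    (integrable_const 1).indicator ((hA i).inter (hA j))]
  refine sum_congr rfl fun i _ => ?_
  rw [integral_finsetSum _ fun j _ => (integrable_const 1).indicator ((hA i).inter (hA j))]
  exact sum_congr rfl fun j _ => integral_indicator_one ((hA i).inter (hA j))

end OccurrenceCount

theorem inclusion_exclusion_lower_bound_general
    {Ω : Type*} [MeasurableSpace Ω] (P : Measure Ω) [IsProbabilityMeasure P]
    (n : ℕ) (A : Fin n → Set Ω) (hA : ∀ i, MeasurableSet (A i)) :
    (∑ i, (P (A i)).toReal) ^ 2 /
      ((∑ i, (P (A i)).toReal) +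
        2 * ∑ i, ∑ j, if i < j then (P (A i ∩ A j)).toReal else 0)
      ≤ (P (⋃ i, A i)).toReal := by
  simp only [← measureReal_def]
  have hsecond := Finset.sum_sum_eq_sum_add_two_mul_sum_sum_ite_lt (fun i j => P.real (A i ∩ A j))
    fun i j => by rw [Set.inter_comm]
  simp only [Set.inter_self] at hsecond
  have hCS := sq_integral_le_measureReal_mul_integral_sq (μ := P) (memLp_occurrenceCount hA 2)
    fun x => occurrenceCount_eq_zero_of_notMem_iUnion A
  rw [integral_occurrenceCount hA, integral_occurrenceCount_sq hA] at hCS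
  rw [← hsecond]
  exact div_le_of_le_mul₀ (by positivity) measureReal_nonneg hCS

theorem inclusion_exclusion_lower_bound
    {Ω : Type*} [MeasurableSpace Ω] (P : Measure Ω) [IsProbabilityMeasure P]
    (n : ℕ) (A : Fin n → Set Ω) (hA : ∀ i, MeasurableSet (A i))
    (hpos : 0 < ∑ i, (P (A i)).toReal) :
    (∑ i, (P (A i)).toReal) ^ 2 /
      ((∑ i, (P (A i)).toReal) +
        2 * ∑ i, ∑ j, if i < j then (P (A i ∩ A j)).toReal else 0)
      ≤ (P (⋃ i, A i)).toReal :=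
  inclusion_exclusion_lower_bound_general P n A hA
end

section
/- With F(a) = (2π)^{−1/2} + (1/2) ∫_ℝ ∫_ℝ G_1(a − z) G_1(a − z′) (|z| + |z′| − |z − z′|) dz dz′, one has F(a)/|a| → 1 as |a| → ∞. -/
open MeasureTheory Real Filter

/-- The heat kernel on `ℝ`, the fundamental solution of `∂ₜ u = ∂ₓ² u`. -/
noncomputable def heatKernel (t x : ℝ) : ℝ :=
  (4 * Real.pi * t) ^ (-(1 / 2 : ℝ)) * Real.exp (-x ^ 2 / (4 * t))

/-- The function `F` appearing in the space-time covariance formula of the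
stationary pinned string. -/
noncomputable def stringF (a : ℝ) : ℝ :=
  (2 * Real.pi) ^ (-(1 / 2 : ℝ)) +
    (1 / 2) * ∫ z : ℝ, ∫ z' : ℝ,
      heatKernel 1 (a - z) * heatKernel 1 (a - z') * (|z| + |z'| - |z - z'|)

/-!
Substituting `z = a - u`, `z' = a - v` turns the double integral into
`∫∫ g u * g v * (|a - u| + |a - v| - |u - v|)` for the probability density `g = G₁`, which is
`2 φ(a) - C` with `φ(a) = ∫ g u * |a - u|` and a constant `C`. Since `||a - u| - |a|| ≤ |u|` and
`g` has a finite first moment, `φ(a) - |a|` is bounded, hence so is `F(a) - |a|`.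
-/

theorem heatKernel_eq_mul_exp (t x : ℝ) :
    heatKernel t x = (4 * π * t) ^ (-(1 / 2 : ℝ)) * exp (-(4 * t)⁻¹ * x ^ 2) := by
  rw [heatKernel]
  congr 2
  ring

theorem heatKernel_nonneg {t : ℝ} (ht : 0 ≤ t) (x : ℝ) : 0 ≤ heatKernel t x := by
  unfold heatKernel; positivity

theorem integrable_heatKernel {t : ℝ} (ht : 0 < t) : Integrable (heatKernel t) := by
  simp only [funext (heatKernel_eq_mul_exp t)]
  exact (integrable_exp_neg_mul_sq (by positivity)).const_mul _

theorem integrable_heatKernel_mul_abs {t : ℝ} (ht : 0 < t) :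
    Integrable fun x => heatKernel t x * |x| := by
  refine ((integrable_mul_exp_neg_mul_sq (b := (4 * t)⁻¹) (by positivity)).norm.const_mul
    ((4 * π * t) ^ (-(1 / 2 : ℝ)))).congr (.of_forall fun x => ?_)
  dsimp only
  rw [heatKernel_eq_mul_exp, norm_mul, norm_of_nonneg (exp_nonneg _), norm_eq_abs]
  ring

theorem integral_heatKernel {t : ℝ} (ht : 0 < t) : ∫ x, heatKernel t x = 1 := by
  simp only [funext (heatKernel_eq_mul_exp t)]
  rw [integral_const_mul, integral_gaussian, div_inv_eq_mul, sqrt_eq_rpow,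
    show π * (4 * t) = 4 * π * t by ring, ← rpow_add (by positivity)]
  norm_num

section ProbabilityDensity

variable {g : ℝ → ℝ}

noncomputable def meanAbsDist (g : ℝ → ℝ) (a : ℝ) : ℝ := ∫ u, g u * |a - u|

theorem integrable_mul_abs_sub (hg : Integrable g) (hg_abs : Integrable fun x => g x * |x|)
    (a : ℝ) : Integrable fun u => g u * |a - u| := by
  refine ((hg.norm.const_mul |a|).add hg_abs.norm).mono'
    (hg.aestronglyMeasurable.mul (by fun_prop : Continuous fun u => |a - u|).aestronglyMeasurable)
    (.of_forall fun u => ?_)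
  simp only [Pi.add_apply, norm_mul, norm_eq_abs, abs_abs]
  nlinarith [abs_sub a u, abs_nonneg (g u)]

theorem abs_meanAbsDist_sub_abs_le (hg0 : ∀ x, 0 ≤ g x) (hg : Integrable g) (hg1 : ∫ x, g x = 1)
    (hg_abs : Integrable fun x => g x * |x|) (a : ℝ) :
    |(meanAbsDist g a - |a|)| ≤ ∫ x, g x * |x| := by
  have hsub : meanAbsDist g a - |a| = ∫ u, g u * (|a - u| - |a|) := by
    simp only [mul_sub]
    rw [integral_sub (integrable_mul_abs_sub hg hg_abs a) (hg.mul_const _), integral_mul_const,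
      hg1, one_mul, meanAbsDist]
  rw [hsub, ← norm_eq_abs]
  refine norm_integral_le_of_norm_le hg_abs (.of_forall fun u => ?_)
  rw [norm_mul, norm_of_nonneg (hg0 u), norm_eq_abs]
  refine mul_le_mul_of_nonneg_left ?_ (hg0 u)
  simpa using abs_abs_sub_abs_le_abs_sub (a - u) a

theorem lipschitzWith_meanAbsDist (hg0 : ∀ x, 0 ≤ g x) (hg : Integrable g)
    (hg1 : ∫ x, g x = 1) (hg_abs : Integrable fun x => g x * |x|) :
    LipschitzWith 1 (meanAbsDist g) := by
  refine LipschitzWith.of_dist_le_mul fun a b => ?_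
  have hsub : meanAbsDist g a - meanAbsDist g b = ∫ u, g u * (|a - u| - |b - u|) := by
    simp only [mul_sub]
    exact (integral_sub (integrable_mul_abs_sub hg hg_abs a)
      (integrable_mul_abs_sub hg hg_abs b)).symm
  rw [NNReal.coe_one, one_mul, dist_eq_norm, dist_eq_norm, hsub]
  calc ‖∫ u, g u * (|a - u| - |b - u|)‖ ≤ ∫ u, g u * ‖a - b‖ := by
        refine norm_integral_le_of_norm_le (hg.mul_const _) (.of_forall fun u => ?_)
        rw [norm_mul, norm_of_nonneg (hg0 u)]
        refine mul_le_mul_of_nonneg_left ?_ (hg0 u)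
        simpa using abs_abs_sub_abs_le_abs_sub (a - u) (b - u)
    _ = ‖a - b‖ := by rw [integral_mul_const, hg1, one_mul]

theorem integrable_mul_meanAbsDist (hg0 : ∀ x, 0 ≤ g x) (hg : Integrable g)
    (hg1 : ∫ x, g x = 1) (hg_abs : Integrable fun x => g x * |x|) :
    Integrable fun u => g u * meanAbsDist g u := by
  refine (hg_abs.add (hg.mul_const (∫ x, g x * |x|))).mono'
    (hg.aestronglyMeasurable.mul
      (lipschitzWith_meanAbsDist hg0 hg hg1 hg_abs).continuous.aestronglyMeasurable)
    (.of_forall fun u => ?_)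
  have hbound : |meanAbsDist g u| ≤ |u| + ∫ x, g x * |x| := by
    have := abs_sub_abs_le_abs_sub (meanAbsDist g u) |u|
    rw [abs_abs] at this
    linarith [abs_meanAbsDist_sub_abs_le hg0 hg hg1 hg_abs u]
  rw [norm_mul, norm_of_nonneg (hg0 u), norm_eq_abs, Pi.add_apply, ← mul_add]
  exact mul_le_mul_of_nonneg_left hbound (hg0 u)

theorem integral_mul_mul_abs_add_abs_sub_abs (hg : Integrable g) (hg1 : ∫ x, g x = 1)
    (hg_abs : Integrable fun x => g x * |x|) (a u : ℝ) :
    ∫ v, g u * g v * (|a - u| + |a - v| - |u - v|) =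
      g u * (|a - u| + meanAbsDist g a - meanAbsDist g u) := by
  have hsplit : (fun v => g u * g v * (|a - u| + |a - v| - |u - v|)) =
      fun v => g u * (g v * |a - u| + g v * |a - v| - g v * |u - v|) := by
    ext v; ring
  have hint := integrable_mul_abs_sub hg hg_abs
  rw [hsplit, integral_const_mul, integral_sub ?_ (hint u), integral_add (hg.mul_const _) (hint a),
    integral_mul_const, hg1, one_mul, meanAbsDist, meanAbsDist]
  exact (hg.mul_const _).add (hint a)

theorem integral_integral_mul_abs_add_abs_sub_abs (hg0 : ∀ x, 0 ≤ g x) (hg : Integrable g)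
    (hg1 : ∫ x, g x = 1) (hg_abs : Integrable fun x => g x * |x|) (a : ℝ) :
    ∫ u, ∫ v, g u * g v * (|a - u| + |a - v| - |u - v|) =
      2 * meanAbsDist g a - ∫ u, g u * meanAbsDist g u := by
  simp_rw [integral_mul_mul_abs_add_abs_sub_abs hg hg1 hg_abs a, mul_sub, mul_add]
  have hint := integrable_mul_abs_sub hg hg_abs a
  rw [integral_sub ?_ (integrable_mul_meanAbsDist hg0 hg hg1 hg_abs),
    integral_add hint (hg.mul_const _), integral_mul_const, hg1, ← meanAbsDist]
  · ring
  · exact hint.add (hg.mul_const _)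

end ProbabilityDensity

theorem integral_integral_comp_sub_left (g : ℝ → ℝ) (a : ℝ) :
    ∫ z, ∫ z', g (a - z) * g (a - z') * (|z| + |z'| - |z - z'|) =
      ∫ u, ∫ v, g u * g v * (|a - u| + |a - v| - |u - v|) := by
  rw [← integral_sub_left_eq_self _ volume a]
  congr 1; ext u
  rw [← integral_sub_left_eq_self _ volume a]
  congr 1; ext v
  rw [sub_sub_cancel, sub_sub_cancel, sub_sub_sub_cancel_left, abs_sub_comm v u]

theorem tendsto_div_abs_cocompact_of_abs_sub_abs_le {f : ℝ → ℝ} {B : ℝ}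
    (hB : ∀ a, |(f a - |a|)| ≤ B) :
    Tendsto (fun a => f a / |a|) (cocompact ℝ) (nhds 1) := by
  have habs : Tendsto (fun a : ℝ => |a|) (cocompact ℝ) atTop := tendsto_norm_cocompact_atTop
  have hrel : Tendsto (fun a => (f a - |a|) / |a|) (cocompact ℝ) (nhds 0) := by
    refine squeeze_zero_norm' ?_ ((tendsto_const_nhds (x := B)).div_atTop habs)
    filter_upwards [habs.eventually_gt_atTop 0] with a ha
    rw [norm_div, norm_eq_abs, norm_eq_abs, abs_abs]
    exact div_le_div_of_nonneg_right (hB a) ha.le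
  rw [← add_zero 1]
  refine (hrel.const_add 1).congr' ?_
  filter_upwards [habs.eventually_gt_atTop 0] with a ha
  rw [sub_div, div_self ha.ne', add_sub_cancel]

theorem stringF_eq_meanAbsDist_add (a : ℝ) :
    stringF a = meanAbsDist (heatKernel 1) a + ((2 * π) ^ (-(1 / 2 : ℝ)) -
      (∫ u, heatKernel 1 u * meanAbsDist (heatKernel 1) u) / 2) := by
  rw [stringF, integral_integral_comp_sub_left, integral_integral_mul_abs_add_abs_sub_abs
    (heatKernel_nonneg zero_le_one) (integrable_heatKernel one_pos) (integral_heatKernel one_pos)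
    (integrable_heatKernel_mul_abs one_pos)]
  ring

theorem stringF_div_abs_tendsto_one :
    Tendsto (fun a : ℝ => stringF a / |a|) (Filter.cocompact ℝ) (nhds 1) := by
  apply tendsto_div_abs_cocompact_of_abs_sub_abs_le
  intro a
  rw [stringF_eq_meanAbsDist_add, add_sub_right_comm]
  exact (abs_add_le _ _).trans (add_le_add (abs_meanAbsDist_sub_abs_le
    (heatKernel_nonneg zero_le_one) (integrable_heatKernel one_pos) (integral_heatKernel one_pos)
    (integrable_heatKernel_mul_abs one_pos) a) le_rfl)
end

section
/- With F(a) = (2π)^{−1/2} + (1/2) ∫_ℝ ∫_ℝ G_1(a − z) G_1(a − z′) (|z| + |z′| − |z − z′|) dz dz′, there exists a constant c_1 > 0 such that for all a ≥ 0, c_1 (1 + a) ≤ F(a) ≤ 2 (1 + a). Moreover one may take c_1 = min((8π)^{−1/2}, inf{F(z)/(2z) : z ≥ 1}), and this infimum is strictly positive. -/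
open MeasureTheory Real

open Set ProbabilityTheory
open scoped NNReal

/-!
With `G₁(a - z)` the density of `N(a, 2)`, `F(a) - (2π)^{-1/2}` is half the expectation of
`|Z| + |Z'| - |Z - Z'|` for independent `Z, Z' ∼ N(a, 2)`. This kernel is nonnegative, at most
`|z| + |z'|`, and at least `2a` when `z, z' ≥ a ≥ 0`. The first two facts give
`(2π)^{-1/2} ≤ F(a) ≤ (2π)^{-1/2} + a + E|N(0, 2)| ≤ 2(1 + a)`; the third, with `P(Z ≥ a) = 1/2`,
gives `F(a) ≥ a/4`, so `F(z)/(2z) ≥ 1/8` for `z ≥ 1`. Finally `c₁(1 + a) ≤ 2(8π)^{-1/2} = (2π)^{-1/2}`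
for `a ≤ 1`, and `c₁(1 + a) ≤ 2a · F(a)/(2a)` for `a ≥ 1`.
-/

theorem integral_Ioi_mul_exp_neg_mul_sq {b : ℝ} (hb : 0 < b) :
    ∫ x in Ioi (0 : ℝ), x * exp (-b * x ^ 2) = (2 * b)⁻¹ := by
  have h := integral_rpow_mul_exp_neg_mul_rpow (p := 2) (q := 1) two_pos (by norm_num) hb
  simp only [rpow_one, rpow_two] at h
  rw [h]
  norm_num [rpow_neg_one]

theorem gaussianPDFReal_zero_eq (v : ℝ≥0) (x : ℝ) :
    gaussianPDFReal 0 v x = (√(2 * π * v))⁻¹ * rexp (-(2 * (v : ℝ))⁻¹ * x ^ 2) := by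
  rw [gaussianPDFReal, sub_zero]
  ring_nf

theorem gaussianPDFReal_zero_abs (v : ℝ≥0) (x : ℝ) :
    gaussianPDFReal 0 v |x| = gaussianPDFReal 0 v x := by
  simp only [gaussianPDFReal, sub_zero, sq_abs]

theorem gaussianPDFReal_eq_comp_sub (μ : ℝ) (v : ℝ≥0) (x : ℝ) :
    gaussianPDFReal μ v x = gaussianPDFReal 0 v (x - μ) := by
  rw [gaussianPDFReal_sub, zero_add]

theorem integrable_gaussianPDFReal_zero_mul_abs {v : ℝ≥0} (hv : v ≠ 0) :
    Integrable fun x => gaussianPDFReal 0 v x * |x| := by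
  have hb : (0 : ℝ) < (2 * (v : ℝ))⁻¹ := by positivity
  convert ((integrable_mul_exp_neg_mul_sq hb).norm.const_mul (√(2 * π * v))⁻¹) using 2 with x
  rw [gaussianPDFReal_zero_eq, norm_mul, norm_of_nonneg (exp_pos _).le, norm_eq_abs]
  ring

theorem integral_gaussianPDFReal_zero_mul_abs {v : ℝ≥0} (hv : v ≠ 0) :
    ∫ x, gaussianPDFReal 0 v x * |x| = √(2 * v / π) := by
  have hpdf (x : ℝ) : gaussianPDFReal 0 v x * x =
      (√(2 * π * v))⁻¹ * (x * rexp (-(2 * (v : ℝ))⁻¹ * x ^ 2)) := by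
    rw [gaussianPDFReal_zero_eq, mul_assoc, mul_comm (rexp _)]
  have hfold := integral_comp_abs (f := fun x => gaussianPDFReal 0 v x * x)
  simp only [gaussianPDFReal_zero_abs, hpdf] at hfold
  rw [hfold, integral_const_mul, integral_Ioi_mul_exp_neg_mul_sq (by positivity),
    show (2 * v / π : ℝ) = (2 * v) ^ 2 / (2 * π * v) by field_simp, sqrt_div' _ (by positivity),
    sqrt_sq (by positivity)]
  field_simp

theorem integral_Ioi_gaussianPDFReal_zero {v : ℝ≥0} (hv : v ≠ 0) :
    ∫ x in Ioi 0, gaussianPDFReal 0 v x = 1 / 2 := by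
  have hfold := integral_comp_abs (f := gaussianPDFReal 0 v)
  simp only [gaussianPDFReal_zero_abs, integral_gaussianPDFReal_eq_one 0 hv] at hfold
  linarith

theorem integral_Ici_gaussianPDFReal (μ : ℝ) {v : ℝ≥0} (hv : v ≠ 0) :
    ∫ x in Ici μ, gaussianPDFReal μ v x = 1 / 2 := by
  have h := (measurePreserving_add_right volume μ).setIntegral_preimage_emb
    (measurableEmbedding_addRight μ) (gaussianPDFReal μ v) (Ici μ)
  rw [← h, preimage_add_const_Ici, sub_self, integral_Ici_eq_integral_Ioi,
    ← integral_Ioi_gaussianPDFReal_zero hv]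
  simp only [gaussianPDFReal_add, sub_self]

theorem gaussianPDFReal_mul_abs_le (μ : ℝ) (v : ℝ≥0) (x : ℝ) :
    gaussianPDFReal μ v x * |x| ≤
      gaussianPDFReal 0 v (x - μ) * |x - μ| + gaussianPDFReal 0 v (x - μ) * |μ| := by
  rw [gaussianPDFReal_eq_comp_sub, ← mul_add]
  exact mul_le_mul_of_nonneg_left (by simpa using abs_add_le (x - μ) μ)
    (gaussianPDFReal_nonneg 0 v _)

theorem integrable_gaussianPDFReal_mul_abs (μ : ℝ) {v : ℝ≥0} (hv : v ≠ 0) :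
    Integrable fun x => gaussianPDFReal μ v x * |x| := by
  have hdom : Integrable fun y => gaussianPDFReal 0 v y * |y| + gaussianPDFReal 0 v y * |μ| :=
    (integrable_gaussianPDFReal_zero_mul_abs hv).add ((integrable_gaussianPDFReal 0 v).mul_const _)
  refine (hdom.comp_sub_right μ).mono' (by fun_prop) (ae_of_all _ fun x => ?_)
  rw [norm_of_nonneg (mul_nonneg (gaussianPDFReal_nonneg _ _ _) (abs_nonneg _))]
  exact gaussianPDFReal_mul_abs_le μ v x


theorem integral_gaussianPDFReal_mul_abs_le (μ : ℝ) {v : ℝ≥0} (hv : v ≠ 0) :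
    ∫ x, gaussianPDFReal μ v x * |x| ≤ |μ| + √(2 * v / π) := by
  have hdom : Integrable fun y => gaussianPDFReal 0 v y * |y| + gaussianPDFReal 0 v y * |μ| :=
    (integrable_gaussianPDFReal_zero_mul_abs hv).add ((integrable_gaussianPDFReal 0 v).mul_const _)
  calc ∫ x, gaussianPDFReal μ v x * |x|
      ≤ ∫ x, (gaussianPDFReal 0 v (x - μ) * |x - μ| + gaussianPDFReal 0 v (x - μ) * |μ|) :=
        integral_mono (integrable_gaussianPDFReal_mul_abs μ hv) (hdom.comp_sub_right μ)
          (gaussianPDFReal_mul_abs_le μ v)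
    _ = |μ| + √(2 * v / π) := by
      rw [integral_sub_right_eq_self (fun y => gaussianPDFReal 0 v y * |y| +
          gaussianPDFReal 0 v y * |μ|), integral_add (integrable_gaussianPDFReal_zero_mul_abs hv)
          ((integrable_gaussianPDFReal 0 v).mul_const _), integral_mul_const,
        integral_gaussianPDFReal_zero_mul_abs hv, integral_gaussianPDFReal_eq_one 0 hv]
      ring

/-- `brownianKernel z z' / 2` is the covariance of two-sided Brownian motion at times `z`, `z'`. -/
def brownianKernel (z z' : ℝ) : ℝ := |z| + |z'| - |z - z'|

theorem brownianKernel_nonneg (z z' : ℝ) : 0 ≤ brownianKernel z z' :=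
  sub_nonneg.2 (abs_sub z z')

theorem brownianKernel_le (z z' : ℝ) : brownianKernel z z' ≤ |z| + |z'| :=
  sub_le_self _ (abs_nonneg _)

theorem two_mul_le_brownianKernel {a z z' : ℝ} (ha : 0 ≤ a) (hz : a ≤ z) (hz' : a ≤ z') :
    2 * a ≤ brownianKernel z z' := by
  rw [brownianKernel, abs_of_nonneg (ha.trans hz), abs_of_nonneg (ha.trans hz')]
  cases abs_cases (z - z') <;> linarith

section

variable {p : ℝ → ℝ}

theorem mul_mul_brownianKernel_le (hp0 : ∀ x, 0 ≤ p x) (q : ℝ × ℝ) :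
    p q.1 * p q.2 * brownianKernel q.1 q.2 ≤ p q.1 * |q.1| * p q.2 + p q.1 * (p q.2 * |q.2|) :=
  calc p q.1 * p q.2 * brownianKernel q.1 q.2 ≤ p q.1 * p q.2 * (|q.1| + |q.2|) :=
        mul_le_mul_of_nonneg_left (brownianKernel_le _ _) (mul_nonneg (hp0 _) (hp0 _))
    _ = p q.1 * |q.1| * p q.2 + p q.1 * (p q.2 * |q.2|) := by ring

theorem integrable_brownianKernel (hp0 : ∀ x, 0 ≤ p x) (hp : Integrable p)
    (hpm : Integrable fun x => p x * |x|) :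
    Integrable (fun q : ℝ × ℝ => p q.1 * p q.2 * brownianKernel q.1 q.2) (volume.prod volume) := by
  refine ((hpm.mul_prod hp).add (hp.mul_prod hpm)).mono'
    ((hp.1.comp_fst.mul hp.1.comp_snd).mul (by unfold brownianKernel; fun_prop))
    (ae_of_all _ fun q => ?_)
  rw [norm_of_nonneg (mul_nonneg (mul_nonneg (hp0 _) (hp0 _)) (brownianKernel_nonneg _ _))]
  exact mul_mul_brownianKernel_le hp0 q

theorem integral_brownianKernel_le (hp0 : ∀ x, 0 ≤ p x) (hp : Integrable p)
    (hpm : Integrable fun x => p x * |x|) :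
    ∫ q, p q.1 * p q.2 * brownianKernel q.1 q.2 ∂(volume.prod volume) ≤
      2 * (∫ x, p x) * ∫ x, p x * |x| := by
  calc ∫ q, p q.1 * p q.2 * brownianKernel q.1 q.2 ∂(volume.prod volume)
      ≤ ∫ q, (p q.1 * |q.1| * p q.2 + p q.1 * (p q.2 * |q.2|)) ∂(volume.prod volume) :=
        integral_mono (integrable_brownianKernel hp0 hp hpm)
          ((hpm.mul_prod hp).add (hp.mul_prod hpm)) (mul_mul_brownianKernel_le hp0)
    _ = 2 * (∫ x, p x) * ∫ x, p x * |x| := by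
      rw [integral_add (hpm.mul_prod hp) (hp.mul_prod hpm),
        integral_prod_mul (fun x => p x * |x|) p, integral_prod_mul p (fun x => p x * |x|)]
      ring

theorem le_integral_brownianKernel (hp0 : ∀ x, 0 ≤ p x) (hp : Integrable p)
    (hpm : Integrable fun x => p x * |x|) {a : ℝ} (ha : 0 ≤ a) :
    2 * a * (∫ x in Ici a, p x) ^ 2 ≤
      ∫ q, p q.1 * p q.2 * brownianKernel q.1 q.2 ∂(volume.prod volume) := by
  set pa := (Ici a).indicator p
  have hpa : Integrable pa := hp.indicator measurableSet_Ici
  calc 2 * a * (∫ x in Ici a, p x) ^ 2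
      = ∫ q, 2 * a * (pa q.1 * pa q.2) ∂(volume.prod volume) := by
        rw [integral_const_mul, integral_prod_mul, integral_indicator measurableSet_Ici, sq]
    _ ≤ ∫ q, p q.1 * p q.2 * brownianKernel q.1 q.2 ∂(volume.prod volume) := by
      refine integral_mono ((hpa.mul_prod hpa).const_mul _)
        (integrable_brownianKernel hp0 hp hpm) fun q => ?_
      by_cases hq : q.1 ∈ Ici a ∧ q.2 ∈ Ici a
      · simp only [pa, indicator_of_mem hq.1, indicator_of_mem hq.2]
        nlinarith [two_mul_le_brownianKernel ha hq.1 hq.2, mul_nonneg (hp0 q.1) (hp0 q.2)]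
      · have hzero : pa q.1 * pa q.2 = 0 := by
          rcases not_and_or.1 hq with h | h <;> simp [pa, indicator_of_notMem h]
        rw [hzero, mul_zero]
        exact mul_nonneg (mul_nonneg (hp0 _) (hp0 _)) (brownianKernel_nonneg _ _)

end

theorem heatKernel_sub_eq_gaussianPDFReal (t : ℝ≥0) (a z : ℝ) :
    heatKernel t (a - z) = gaussianPDFReal a (2 * t) z := by
  rw [heatKernel, gaussianPDFReal, rpow_neg (by positivity), ← sqrt_eq_rpow]
  push_cast
  ring_nf

theorem stringF_eq_integral_brownianKernel (a : ℝ) :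
    stringF a = (2 * π) ^ (-(1 / 2 : ℝ)) + 1 / 2 * ∫ q, gaussianPDFReal a 2 q.1 *
      gaussianPDFReal a 2 q.2 * brownianKernel q.1 q.2 ∂(volume.prod volume) := by
  have hG (z : ℝ) : heatKernel 1 (a - z) = gaussianPDFReal a 2 z := by
    simpa using heatKernel_sub_eq_gaussianPDFReal 1 a z
  simp only [stringF, hG]
  rw [integral_integral (integrable_brownianKernel (gaussianPDFReal_nonneg a 2)
    (integrable_gaussianPDFReal a 2) (integrable_gaussianPDFReal_mul_abs a two_ne_zero))]
  rfl

theorem rpow_two_pi_add_sqrt_four_div_pi_le_two :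
    (2 * π) ^ (-(1 / 2 : ℝ)) + √(2 * 2 / π) ≤ 2 := by
  have h1 : (2 * π) ^ (-(1 / 2 : ℝ)) ≤ 1 / 2 := by
    rw [rpow_neg (by positivity), ← sqrt_eq_rpow, inv_le_comm₀ (by positivity) (by norm_num),
      le_sqrt (by norm_num) (by positivity)]
    nlinarith [pi_gt_three]
  have h2 : √(2 * 2 / π) ≤ 3 / 2 := by
    rw [sqrt_le_left (by norm_num), div_le_iff₀ pi_pos]
    nlinarith [pi_gt_three]
  linarith

theorem stringF_le {a : ℝ} (ha : 0 ≤ a) : stringF a ≤ 2 * (1 + a) := by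
  have hI := integral_brownianKernel_le (gaussianPDFReal_nonneg a 2)
    (integrable_gaussianPDFReal a 2) (integrable_gaussianPDFReal_mul_abs a two_ne_zero)
  have hm := integral_gaussianPDFReal_mul_abs_le a (v := 2) two_ne_zero
  rw [integral_gaussianPDFReal_eq_one a two_ne_zero] at hI
  rw [NNReal.coe_ofNat, abs_of_nonneg ha] at hm
  rw [stringF_eq_integral_brownianKernel]
  linarith [rpow_two_pi_add_sqrt_four_div_pi_le_two]

theorem rpow_two_pi_le_stringF (a : ℝ) : (2 * π) ^ (-(1 / 2 : ℝ)) ≤ stringF a := by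
  rw [stringF_eq_integral_brownianKernel, le_add_iff_nonneg_right]
  exact mul_nonneg (by norm_num) (integral_nonneg fun q =>
    mul_nonneg (mul_nonneg (gaussianPDFReal_nonneg _ _ _) (gaussianPDFReal_nonneg _ _ _))
      (brownianKernel_nonneg _ _))

theorem div_four_le_stringF {a : ℝ} (ha : 0 ≤ a) : a / 4 ≤ stringF a := by
  have hI := le_integral_brownianKernel (gaussianPDFReal_nonneg a 2)
    (integrable_gaussianPDFReal a 2) (integrable_gaussianPDFReal_mul_abs a two_ne_zero) ha
  rw [integral_Ici_gaussianPDFReal a two_ne_zero] at hI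
  rw [stringF_eq_integral_brownianKernel]
  have : 0 < (2 * π) ^ (-(1 / 2 : ℝ)) := by positivity
  linarith

theorem rpow_eight_pi_mul_two : (8 * π) ^ (-(1 / 2 : ℝ)) * 2 = (2 * π) ^ (-(1 / 2 : ℝ)) := by
  rw [show 8 * π = 2 ^ (2 : ℝ) * (2 * π) by norm_num; ring, mul_rpow (by positivity)
    (by positivity), ← rpow_mul (by norm_num)]
  norm_num
  ring

theorem stringF_two_sided_bound :
    ∃ c₁ : ℝ, 0 < c₁ ∧
      c₁ = min ((8 * Real.pi) ^ (-(1 / 2 : ℝ)))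
        (sInf {r : ℝ | ∃ z : ℝ, 1 ≤ z ∧ r = stringF z / (2 * z)}) ∧
      0 < sInf {r : ℝ | ∃ z : ℝ, 1 ≤ z ∧ r = stringF z / (2 * z)} ∧
      ∀ a : ℝ, 0 ≤ a → c₁ * (1 + a) ≤ stringF a ∧ stringF a ≤ 2 * (1 + a) := by
  set S := {r : ℝ | ∃ z : ℝ, 1 ≤ z ∧ r = stringF z / (2 * z)}
  have hS : ∀ r ∈ S, 1 / 8 ≤ r := by
    rintro r ⟨z, hz, rfl⟩
    rw [le_div_iff₀ (by positivity)]
    linarith [div_four_le_stringF (zero_le_one.trans hz)]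
  have hS_pos : 0 < sInf S := (by norm_num : (0 : ℝ) < 1 / 8).trans_le
    (le_csInf ⟨_, 1, le_rfl, rfl⟩ hS)
  refine ⟨_, lt_min (by positivity) hS_pos, rfl, hS_pos, fun a ha => ⟨?_, stringF_le ha⟩⟩
  rcases le_total a 1 with ha1 | ha1
  · calc min ((8 * π) ^ (-(1 / 2 : ℝ))) (sInf S) * (1 + a)
        ≤ (8 * π) ^ (-(1 / 2 : ℝ)) * 2 := by
          gcongr
          · exact min_le_left _ _
          · linarith
      _ = (2 * π) ^ (-(1 / 2 : ℝ)) := rpow_eight_pi_mul_two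
      _ ≤ stringF a := rpow_two_pi_le_stringF a
  · have hmem : stringF a / (2 * a) ∈ S := ⟨a, ha1, rfl⟩
    calc min ((8 * π) ^ (-(1 / 2 : ℝ))) (sInf S) * (1 + a)
        ≤ stringF a / (2 * a) * (2 * a) :=
          mul_le_mul ((min_le_right _ _).trans (csInf_le ⟨1 / 8, hS⟩ hmem)) (by linarith)
            (by positivity) ((by norm_num : (0 : ℝ) ≤ 1 / 8).trans (hS _ hmem))
      _ = stringF a := div_mul_cancel₀ _ (by positivity)
end
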